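/- Let 𝔤 = 𝔤_{4.1} be the 4-dimensional real Lie algebra with basis e₁,...,e₄ and nonzero brackets [e₂,e₄] = e₁ and [e₃,e₄] = e₂. A 4×4 real matrix R equals η·Id + D for some η ∈ ℝ and some derivation D of 𝔤 if and only if R₂₁ = R₃₁ = R₄₁ = 0, R₃₂ = R₄₂ = R₄₃ = 0, R₂₃ = R₁₂, and R₂₂ + R₄₄ − R₁₁ = R₃₃ + R₄₄ − R₂₂. In this case η = R₂₂ + R₄₄ − R₁₁. -/

import Mathlib

open Matrix

/-!
Testing the derivation identity on the basis pairs turns `IsDer D` into nine linear conditions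
on the entries of `D`: it is upper triangular with `D₂₃ = D₁₂`, `D₁₁ = D₂₂ + D₄₄` and
`D₂₂ = D₃₃ + D₄₄`. For `D = R - η • 1` the two diagonal conditions each
determine `η`, and they agree exactly when `R₂₂ + R₄₄ - R₁₁ = R₃₃ + R₄₄ - R₂₂`.
Subscripts here count from 1, Lean's indices from 0: `D₁₁` is `D 0 0`.
-/

/-- The Lie bracket of the Lie algebra, in coordinates. -/
def br (x y : Fin 4 → ℝ) : Fin 4 → ℝ :=
  ![(x 1 * y 3 - x 3 * y 1), (x 2 * y 3 - x 3 * y 2), (0:ℝ), (0:ℝ)]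

/-- `D` (acting via `mulVec`) is a derivation of the bracket. -/
def IsDer (D : Matrix (Fin 4) (Fin 4) ℝ) : Prop :=
  ∀ x y : Fin 4 → ℝ, D.mulVec (br x y) = br (D.mulVec x) y + br x (D.mulVec y)

lemma isDer_iff (D : Matrix (Fin 4) (Fin 4) ℝ) : IsDer D ↔
    (D 1 0 = 0 ∧ D 2 0 = 0 ∧ D 3 0 = 0 ∧ D 2 1 = 0 ∧ D 3 1 = 0 ∧ D 3 2 = 0 ∧
      D 1 2 = D 0 1 ∧ D 0 0 = D 1 1 + D 3 3 ∧ D 1 1 = D 2 2 + D 3 3) := by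
  constructor
  · intro hD
    have pair01 := hD ![1, 0, 0, 0] ![0, 1, 0, 0]
    have pair03 := hD ![1, 0, 0, 0] ![0, 0, 0, 1]
    have pair12 := hD ![0, 1, 0, 0] ![0, 0, 1, 0]
    have pair13 := hD ![0, 1, 0, 0] ![0, 0, 0, 1]
    have pair23 := hD ![0, 0, 1, 0] ![0, 0, 0, 1]
    simp only [funext_iff, Fin.forall_fin_succ, IsEmpty.forall_iff]
      at pair01 pair03 pair12 pair13 pair23
    simp only [mulVec, dotProduct, Fin.isValue, br, cons_val_one, cons_val_zero, cons_val,
      mul_zero, mul_one, sub_self, Fin.sum_univ_four, add_zero, zero_sub, zero_add, zero_mul,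
      Pi.add_apply, zero_eq_neg, Fin.succ_zero_eq_one, Fin.succ_one_eq_two, Fin.reduceSucc,
      and_self, and_true, sub_zero, one_mul] at pair01 pair03 pair12 pair13 pair23
    refine ⟨?_, ?_, ?_, ?_, ?_, ?_, ?_, ?_, ?_⟩ <;> linarith
  · rintro ⟨h10, h20, h30, h21, h31, h32, h12, h00, h11⟩ x y
    ext i
    fin_cases i <;>
      simp [mulVec, br, dotProduct, Fin.sum_univ_four, h10, h20, h30, h21, h31, h32, h12, h00, h11]
        <;> ring

lemma isDer_sub_smul_one_iff (R : Matrix (Fin 4) (Fin 4) ℝ) (η : ℝ) :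
    IsDer (R - η • 1) ↔
      (R 1 0 = 0 ∧ R 2 0 = 0 ∧ R 3 0 = 0 ∧ R 2 1 = 0 ∧ R 3 1 = 0 ∧ R 3 2 = 0 ∧
        R 1 2 = R 0 1 ∧ η = R 1 1 + R 3 3 - R 0 0 ∧
        R 1 1 + R 3 3 - R 0 0 = R 2 2 + R 3 3 - R 1 1) := by
  simp only [isDer_iff, Matrix.sub_apply, Matrix.smul_apply, one_apply_eq, one_apply_ne, ne_eq,
    Fin.reduceEq, not_false_eq_true, sub_zero, smul_eq_mul, mul_zero, mul_one]
  constructor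
  · rintro ⟨h10, h20, h30, h21, h31, h32, h12, h00, h11⟩
    exact ⟨h10, h20, h30, h21, h31, h32, h12, by linarith, by linarith⟩
  · rintro ⟨h10, h20, h30, h21, h31, h32, h12, hη, hR⟩
    exact ⟨h10, h20, h30, h21, h31, h32, h12, by linarith, by linarith⟩

theorem stmt_11 (R : Matrix (Fin 4) (Fin 4) ℝ) :
    ((∃ (η : ℝ) (D : Matrix (Fin 4) (Fin 4) ℝ), IsDer D ∧
        R = η • (1 : Matrix (Fin 4) (Fin 4) ℝ) + D) ↔
      (R 1 0 = 0 ∧ R 2 0 = 0 ∧ R 3 0 = 0 ∧ R 2 1 = 0 ∧ R 3 1 = 0 ∧ R 3 2 = 0 ∧ R 1 2 = R 0 1 ∧ R 1 1 + R 3 3 - R 0 0 = R 2 2 + R 3 3 - R 1 1)) ∧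
    (∀ (η : ℝ) (D : Matrix (Fin 4) (Fin 4) ℝ), IsDer D →
      R = η • (1 : Matrix (Fin 4) (Fin 4) ℝ) + D → η = R 1 1 + R 3 3 - R 0 0) := by
  have eq_smul_one_add_iff : ∀ (η : ℝ) (D : Matrix (Fin 4) (Fin 4) ℝ),
      R = η • (1 : Matrix (Fin 4) (Fin 4) ℝ) + D ↔ D = R - η • 1 := fun η D => by
    rw [eq_sub_iff_add_eq', eq_comm]
  simp only [eq_smul_one_add_iff, exists_eq_right, isDer_sub_smul_one_iff]
  constructor
  · constructor
    · rintro ⟨η, h10, h20, h30, h21, h31, h32, h12, -, hR⟩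
      exact ⟨h10, h20, h30, h21, h31, h32, h12, hR⟩
    · rintro ⟨h10, h20, h30, h21, h31, h32, h12, hR⟩
      exact ⟨_, h10, h20, h30, h21, h31, h32, h12, rfl, hR⟩
  · rintro η _ hder rfl
    obtain ⟨-, -, -, -, -, -, -, hη, -⟩ := (isDer_sub_smul_one_iff R η).1 hder
    exact hη
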